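/- For every nonnegative integer m, the maximum of g(t) over integers t with 2^m ≤ t < 2^{m+1} equals (1/9)·(m + round(2^m/3)/2^m), where round denotes the nearest integer. -/

import Mathlib

open Finset

/-- The largest odd divisor of `k`. -/
def oddPart (k : ℕ) : ℕ := ordCompl[2] k

/-- `V n = ∑_{k=1}^n α(k)/k` as a rational number. -/
def V (n : ℕ) : ℚ := ∑ k ∈ Finset.Icc 1 n, (oddPart k : ℚ) / k

/-- `v n = V n - 2n/3`. -/
def v (n : ℕ) : ℚ := V n - 2 * n / 3

/-- `U n = ∑_{k=1}^n α(k)`. -/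
def U (n : ℕ) : ℕ := ∑ k ∈ Finset.Icc 1 n, oddPart k

/-- `G n = ∑_{k=1}^n (n+1-k)·α(k)/k` as a rational number. -/
def G (n : ℕ) : ℚ := ∑ k ∈ Finset.Icc 1 n, ((n : ℚ) + 1 - k) * (oddPart k : ℚ) / k

/-- `g n = n(n+2)/3 - G n`. -/
def g (n : ℕ) : ℚ := n * (n + 2) / 3 - G n

/-!
Both `g` and `v` satisfy binary recursions: `v (2n) = v n / 2`, `v (2n+1) = v n / 2 + 1/3`,
`g (2n) = g n + v n / 2` and `g (2n+1) = g n`. Hence it is natural to maximise the weighted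
quantity `g t + λ v t` over the dyadic block `2^m ≤ t < 2^(m+1)` for every `λ ∈ [0, 1]`: passing
from `t` to `2t` or `2t+1` turns the weight `λ` into `(1+λ)/2` or `λ/2`, and the maximum
`peak m λ` is the larger of two explicit affine functions of `λ`, satisfying
`peak (m+1) λ = max (peak m ((1+λ)/2)) (peak m (λ/2) + λ/3)`.
At `λ = 0` this gives `peak m 0 = (m + (2^m - (-1)^m)/(3·2^m))/9`.
-/

lemma oddPart_two_mul (k : ℕ) : oddPart (2 * k) = oddPart k := by
  simpa [oddPart] using Nat.ordCompl_self_pow_mul k 1 Nat.prime_two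

lemma oddPart_of_odd {k : ℕ} (hk : Odd k) : oddPart k = k :=
  (Nat.ordCompl_eq_self_iff_zero_or_not_dvd k Nat.prime_two).mpr (Or.inr hk.not_two_dvd_nat)

lemma V_succ (n : ℕ) : V (n + 1) = V n + oddPart (n + 1) / (n + 1) := by
  rw [V, V, sum_Icc_succ_top (by omega)]
  push_cast; ring

lemma V_two_mul (n : ℕ) : V (2 * n) = n + V n / 2 := by
  induction n with
  | zero => simp [V]
  | succ n ih =>
    rw [show 2 * (n + 1) = 2 * n + 1 + 1 by ring, V_succ, V_succ, ih, V_succ,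
      oddPart_of_odd (odd_two_mul_add_one n), show 2 * n + 1 + 1 = 2 * (n + 1) by ring,
      oddPart_two_mul]
    push_cast
    field_simp
    ring

lemma v_two_mul (n : ℕ) : v (2 * n) = v n / 2 := by
  rw [v, v, V_two_mul]; push_cast; ring

lemma v_two_mul_add_one (n : ℕ) : v (2 * n + 1) = v n / 2 + 1 / 3 := by
  rw [v, V_succ, V_two_mul, oddPart_of_odd (odd_two_mul_add_one n), v]
  push_cast
  field_simp
  ring

lemma v_one : v 1 = 1 / 3 := by
  simpa [v_two_mul, v, V] using v_two_mul_add_one 0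

lemma G_succ (n : ℕ) : G (n + 1) = G n + V (n + 1) := by
  rw [G, sum_Icc_succ_top (by omega), V, sum_Icc_succ_top (by omega), G, ← add_assoc,
    ← sum_add_distrib]
  congr 1
  · refine sum_congr rfl fun k _ => ?_
    push_cast; ring
  · push_cast; ring

lemma g_succ (n : ℕ) : g (n + 1) = g n + 1 / 3 - v (n + 1) := by
  rw [g, g, G_succ, v]
  push_cast
  ring

lemma g_two_mul (n : ℕ) : g (2 * n) = g n + v n / 2 := by
  induction n with
  | zero => simp [g, G, v, V]
  | succ n ih =>
    rw [show 2 * (n + 1) = 2 * n + 1 + 1 by ring, g_succ, g_succ, ih, g_succ,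
      v_two_mul_add_one, show 2 * n + 1 + 1 = 2 * (n + 1) by ring, v_two_mul]
    ring

lemma g_two_mul_add_one (n : ℕ) : g (2 * n + 1) = g n := by
  rw [g_succ, g_two_mul, v_two_mul_add_one]
  ring

lemma g_one : g 1 = 0 := by
  simpa [g, G] using g_two_mul_add_one 0

def peakLow (m : ℕ) (l : ℚ) : ℚ := (m + 1 / 3 + 2 * l + (-1) ^ m * (l - 1 / 3) / 2 ^ m) / 9

def peakHigh (m : ℕ) (l : ℚ) : ℚ := (m - 2 / 3 + 4 * l + (-1) ^ m * (2 / 3 - l) / 2 ^ m) / 9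

def peak (m : ℕ) (l : ℚ) : ℚ := max (peakLow m l) (peakHigh m l)

lemma peakHigh_sub_peakLow (m : ℕ) (l : ℚ) :
    peakHigh m l - peakLow m l = (2 * l - 1) * (1 - (-1) ^ m / 2 ^ m) / 9 := by
  rw [peakHigh, peakLow]; ring

lemma neg_one_pow_div_two_pow_le_one (m : ℕ) : (-1 : ℚ) ^ m / 2 ^ m ≤ 1 := by
  rw [div_le_one (by positivity)]
  exact (le_abs_self _).trans ((abs_neg_one_pow m).trans_le (one_le_pow₀ one_le_two))

lemma peak_of_le_half {m : ℕ} {l : ℚ} (hl : l ≤ 1 / 2) : peak m l = peakLow m l := by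
  refine max_eq_left (sub_nonpos.mp ?_)
  rw [peakHigh_sub_peakLow]
  have := neg_one_pow_div_two_pow_le_one m
  exact div_nonpos_of_nonpos_of_nonneg (mul_nonpos_of_nonpos_of_nonneg (by linarith)
    (by linarith)) (by norm_num)

lemma peak_of_half_le {m : ℕ} {l : ℚ} (hl : 1 / 2 ≤ l) : peak m l = peakHigh m l := by
  refine max_eq_right (sub_nonneg.mp ?_)
  rw [peakHigh_sub_peakLow]
  have := neg_one_pow_div_two_pow_le_one m
  exact div_nonneg (mul_nonneg (by linarith) (by linarith)) (by norm_num)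

lemma peakHigh_half_one_add (m : ℕ) (l : ℚ) : peakHigh m ((1 + l) / 2) = peakLow (m + 1) l := by
  rw [peakHigh, peakLow, pow_succ, pow_succ]
  push_cast
  field_simp
  ring

lemma peakLow_half_add (m : ℕ) (l : ℚ) : peakLow m (l / 2) + l / 3 = peakHigh (m + 1) l := by
  rw [peakHigh, peakLow, pow_succ, pow_succ]
  push_cast
  field_simp
  ring

lemma peak_succ {m : ℕ} {l : ℚ} (h0 : 0 ≤ l) (h1 : l ≤ 1) :
    peak (m + 1) l = max (peak m ((1 + l) / 2)) (peak m (l / 2) + l / 3) := by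
  rw [peak_of_half_le (l := (1 + l) / 2) (by linarith), peak_of_le_half (l := l / 2) (by linarith),
    peakHigh_half_one_add,
    peakLow_half_add, peak]

lemma peak_zero (l : ℚ) : peak 0 l = l / 3 := by
  rw [peak, show peakLow 0 l = l / 3 by rw [peakLow]; ring,
    show peakHigh 0 l = l / 3 by rw [peakHigh]; ring, max_self]

lemma g_add_mul_v_le_peak {m t : ℕ} (ht : 2 ^ m ≤ t) (ht' : t < 2 ^ (m + 1)) {l : ℚ}
    (h0 : 0 ≤ l) (h1 : l ≤ 1) : g t + l * v t ≤ peak m l := by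
  induction m generalizing t l with
  | zero =>
    obtain rfl : t = 1 := by omega
    rw [g_one, v_one, peak_zero]
    linarith
  | succ m ih =>
    rw [peak_succ h0 h1]
    obtain ⟨n, rfl | rfl⟩ := Nat.even_or_odd' t
    · have := ih (t := n) (by omega) (by omega) (l := (1 + l) / 2) (by linarith) (by linarith)
      rw [g_two_mul, v_two_mul]
      exact le_max_of_le_left (by linarith)
    · have := ih (t := n) (by omega) (by omega) (l := l / 2) (by linarith) (by linarith)
      rw [g_two_mul_add_one, v_two_mul_add_one]
      exact le_max_of_le_right (by linarith)

lemma exists_g_add_mul_v_eq_peak (m : ℕ) {l : ℚ} (h0 : 0 ≤ l) (h1 : l ≤ 1) :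
    ∃ t, 2 ^ m ≤ t ∧ t < 2 ^ (m + 1) ∧ g t + l * v t = peak m l := by
  induction m generalizing l with
  | zero => exact ⟨1, le_rfl, by norm_num, by rw [g_one, v_one, peak_zero]; ring⟩
  | succ m ih =>
    rw [peak_succ h0 h1]
    rcases max_choice (peak m ((1 + l) / 2)) (peak m (l / 2) + l / 3) with h | h <;> rw [h]
    · obtain ⟨n, hn, hn', hpeak⟩ := ih (l := (1 + l) / 2) (by linarith) (by linarith)
      refine ⟨2 * n, by omega, by omega, ?_⟩
      rw [g_two_mul, v_two_mul, ← hpeak]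
      ring
    · obtain ⟨n, hn, hn', hpeak⟩ := ih (l := l / 2) (by linarith) (by linarith)
      refine ⟨2 * n + 1, by omega, by omega, ?_⟩
      rw [g_two_mul_add_one, v_two_mul_add_one, ← hpeak]
      ring

lemma round_two_pow_div_three (m : ℕ) :
    (round ((2 : ℚ) ^ m / 3) : ℚ) = (2 ^ m - (-1) ^ m) / 3 := by
  obtain ⟨c, hc⟩ := sub_dvd_pow_sub_pow (2 : ℤ) (-1) m
  have hc' : (2 : ℚ) ^ m = 3 * c + (-1) ^ m := by
    have := congrArg (fun z : ℤ => (z : ℚ)) hc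
    push_cast at this
    linarith
  have hround : round ((2 : ℚ) ^ m / 3) = c := by
    rw [round_eq_iff, hc', Set.mem_Ico]
    rcases neg_one_pow_eq_or ℚ m with h | h <;> rw [h] <;> constructor <;> linarith
  rw [hround, hc']
  ring

lemma peak_zero_eq (m : ℕ) :
    peak m 0 = 1 / 9 * ((m : ℚ) + (round ((2 : ℚ) ^ m / 3) : ℚ) / 2 ^ m) := by
  rw [peak_of_le_half (by norm_num), peakLow, round_two_pow_div_three]
  field_simp
  ring

theorem stmt19 (m : ℕ) :
    IsGreatest {x : ℚ | ∃ t : ℕ, 2 ^ m ≤ t ∧ t < 2 ^ (m + 1) ∧ g t = x}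
      ((1 / 9) * ((m : ℚ) + (round ((2 : ℚ) ^ m / 3) : ℚ) / 2 ^ m)) := by
  rw [← peak_zero_eq]
  constructor
  · obtain ⟨t, ht, ht', hpeak⟩ := exists_g_add_mul_v_eq_peak m le_rfl zero_le_one
    exact ⟨t, ht, ht', by simpa using hpeak⟩
  · rintro x ⟨t, ht, ht', rfl⟩
    simpa using g_add_mul_v_le_peak ht ht' le_rfl zero_le_one
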